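/- arXiv:1807.07721 — 2 statements merged into one kernel-verified Lean document; each statement's English description precedes it below -/
import Mathlib

section
/- Let X be the simple random walk on a connected graph G = (V,E) with stationary distribution π and symmetric hitting times, i.e. E_i[τ_j] = E_j[τ_i] for all i, j ∈ V. Then the access time from any distribution μ to π satisfies H(μ,π) = max_{j ∈ V} Σ_{i ∈ V} μ_i E_i[τ_j] − t_av, and in particular H(μ,π) ≤ max_{i,j ∈ V} E_i[τ_j] − t_av. -/
/-!
The function `s j = ∑ i, π i * E_i[τ_j]` is constant, equal to `t_av`; the theorem then
follows by subtracting it inside the maximum. Multiplying the first-step equations by the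
degrees turns them into `L h_j = d - 2|E| δ_j` for the graph Laplacian `L`, the degree
vector `d` and `h_j = E_·[τ_j]` (the value at `j` is forced because the entries of `L x`
sum to zero). By symmetry `s` is a multiple of `j ↦ ∑ i, h_i j * d i`, so
`L s ∝ ∑ i, d i (d - 2|E| δ_i) = 2|E| d - 2|E| d = 0`, and the kernel of the Laplacian of a
connected graph consists of the constants.
-/

open Finset Matrix

namespace SimpleGraph

variable {V : Type*} [Fintype V] (G : SimpleGraph V) [DecidableRel G.Adj]

noncomputable def randomWalk : Matrix V V ℝ :=
  of fun i j => if G.Adj i j then 1 / (G.degree i : ℝ) else 0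

noncomputable def stationaryDist (i : V) : ℝ :=
  G.degree i / (2 * #G.edgeFinset)

theorem degree_mul_randomWalk (i k : V) :
    G.degree i * G.randomWalk i k = if G.Adj i k then 1 else 0 := by
  unfold randomWalk
  split_ifs with hik
  · have : (G.degree i : ℝ) ≠ 0 := by
      exact_mod_cast ((G.degree_pos_iff_exists_adj i).2 ⟨k, hik⟩).ne'
    simp [hik, this]
  · simp [hik]

theorem sum_degrees_cast {R : Type*} [NonAssocSemiring R] :
    ∑ i, (G.degree i : R) = 2 * (#G.edgeFinset : R) := by
  simpa using congrArg (Nat.cast (R := R)) G.sum_degrees_eq_twice_card_edges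

variable [DecidableEq V]

theorem sum_lapMatrix_mulVec {R : Type*} [CommRing R] (x : V → R) :
    ∑ i, (G.lapMatrix R *ᵥ x) i = 0 := by
  have hsum : ∑ i, (G.lapMatrix R *ᵥ x) i = (fun _ => 1) ⬝ᵥ (G.lapMatrix R *ᵥ x) := by
    simp [dotProduct]
  rw [hsum, dotProduct_mulVec, ← mulVec_transpose, (G.isSymm_lapMatrix R).eq,
    lapMatrix_mulVec_const_eq_zero, zero_dotProduct]

theorem lapMatrix_mulVec_apply_eq_of_forall_ne {R : Type*} [CommRing R] {x : V → R} {j : V}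
    (hx : ∀ i ≠ j, (G.lapMatrix R *ᵥ x) i = G.degree i) :
    (G.lapMatrix R *ᵥ x) j = G.degree j - 2 * #G.edgeFinset := by
  have hsum := G.sum_lapMatrix_mulVec x
  have hdeg := G.sum_degrees_cast (R := R)
  rw [← add_sum_erase _ _ (mem_univ j), sum_congr rfl fun i hi => hx i (ne_of_mem_erase hi)]
    at hsum
  rw [← add_sum_erase _ _ (mem_univ j)] at hdeg
  linear_combination hsum - hdeg

theorem lapMatrix_mulVec_apply_of_eq_one_add_randomWalk {f : V → ℝ} {i : V}
    (hf : f i = 1 + ∑ k, G.randomWalk i k * f k) :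
    (G.lapMatrix ℝ *ᵥ f) i = G.degree i := by
  have hnbr : ∑ k, G.degree i * G.randomWalk i k * f k = ∑ k ∈ G.neighborFinset i, f k := by
    simp only [degree_mul_randomWalk, ite_mul, one_mul, zero_mul, sum_ite, sum_const_zero,
      add_zero, neighborFinset_eq_filter]
  rw [lapMatrix_mulVec_apply, ← hnbr, hf, mul_add, mul_sum]
  simp only [mul_assoc]
  ring

theorem lapMatrix_mul_eq_of_hitting {ET : Matrix V V ℝ}
    (hstep : ∀ i j, i ≠ j → ET i j = 1 + ∑ k, G.randomWalk i k * ET k j) :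
    G.lapMatrix ℝ * ET =
      of fun i j => (G.degree i : ℝ) - if i = j then (2 * #G.edgeFinset : ℝ) else 0 := by
  ext i j
  have hcol : ∀ i ≠ j, (G.lapMatrix ℝ *ᵥ fun k => ET k j) i = G.degree i :=
    fun i hij => G.lapMatrix_mulVec_apply_of_eq_one_add_randomWalk (hstep i j hij)
  rw [show (G.lapMatrix ℝ * ET) i j = (G.lapMatrix ℝ *ᵥ fun k => ET k j) i from rfl, of_apply]
  split_ifs with hij
  · subst hij
    exact G.lapMatrix_mulVec_apply_eq_of_forall_ne hcol
  · simpa using hcol i hij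

theorem lapMatrix_mulVec_mulVec_degree_eq_zero_of_hitting {ET : Matrix V V ℝ}
    (hstep : ∀ i j, i ≠ j → ET i j = 1 + ∑ k, G.randomWalk i k * ET k j) :
    G.lapMatrix ℝ *ᵥ (ET *ᵥ fun i => (G.degree i : ℝ)) = 0 := by
  rw [mulVec_mulVec, G.lapMatrix_mul_eq_of_hitting hstep]
  ext j
  simp [mulVec, dotProduct, sub_mul, sum_sub_distrib, ← mul_sum, G.sum_degrees_cast]
  ring

variable {G}

theorem Connected.sum_stationaryDist_mul_eq_of_hitting (hG : G.Connected)
    {ET : Matrix V V ℝ}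
    (hstep : ∀ i j, i ≠ j → ET i j = 1 + ∑ k, G.randomWalk i k * ET k j)
    (hsym : ∀ i j, ET i j = ET j i) (j : V) :
    ∑ i, G.stationaryDist i * ET i j
      = ∑ i, ∑ k, G.stationaryDist i * G.stationaryDist k * ET i k := by
  rcases eq_or_ne #G.edgeFinset 0 with hE | hE
  · simp [stationaryDist, hE]
  have hsum : ∑ i, G.stationaryDist i = 1 := by
    simp only [stationaryDist]
    rw [← sum_div, G.sum_degrees_cast, div_self (by positivity)]
  have hdist :
      G.stationaryDist = (2 * #G.edgeFinset : ℝ)⁻¹ • fun i => (G.degree i : ℝ) := by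
    funext i
    simp [stationaryDist, div_eq_inv_mul]
  have hcol : ∀ j, ∑ i, G.stationaryDist i * ET i j = (ET *ᵥ G.stationaryDist) j := by
    simp [mulVec, dotProduct, hsym, mul_comm]
  have hconst : ∀ j k, (ET *ᵥ G.stationaryDist) j = (ET *ᵥ G.stationaryDist) k := by
    refine fun j k =>
      (lapMatrix_mulVec_eq_zero_iff_forall_reachable G).1 ?_ j k (hG.preconnected j k)
    rw [hdist, mulVec_smul, mulVec_smul,
      G.lapMatrix_mulVec_mulVec_degree_eq_zero_of_hitting hstep, smul_zero]
  calc ∑ i, G.stationaryDist i * ET i j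
      = ∑ k, G.stationaryDist k * (ET *ᵥ G.stationaryDist) j := by
        rw [← sum_mul, hsum, one_mul, hcol]
    _ = ∑ k, G.stationaryDist k * ∑ i, G.stationaryDist i * ET i k := by
        simp only [hcol]
        exact sum_congr rfl fun k _ => by rw [hconst j k]
    _ = ∑ i, ∑ k, G.stationaryDist i * G.stationaryDist k * ET i k := by
        rw [sum_comm]
        simp only [mul_sum, mul_left_comm, mul_assoc]

end SimpleGraph

theorem rw_symmetric_hitting_access_time_to_stationary_general
    {V : Type*} [Fintype V] [DecidableEq V] [Nonempty V]
    (G : SimpleGraph V) [DecidableRel G.Adj] (hG : G.Connected)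
    (P : V → V → ℝ)
    (hP : ∀ i j, P i j = if G.Adj i j then 1 / (G.degree i : ℝ) else 0)
    (ET : V → V → ℝ)
    (hET_step : ∀ i j, i ≠ j → ET i j = 1 + ∑ k, P i k * ET k j)
    (hET_sym : ∀ i j, ET i j = ET j i)
    (π : V → ℝ)
    (hπ : ∀ i, π i = (G.degree i : ℝ) / (2 * (G.edgeFinset.card : ℝ)))
    (tav : ℝ)
    (htav : tav = ∑ i, ∑ j, π i * π j * ET i j)
    (μ : V → ℝ)
    (hμ0 : ∀ i, 0 ≤ μ i) (hμ1 : ∑ i, μ i = 1) :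
    univ.sup' univ_nonempty (fun j => ∑ i, (μ i - π i) * ET i j)
      = univ.sup' univ_nonempty (fun j => ∑ i, μ i * ET i j) - tav ∧
    univ.sup' univ_nonempty (fun j => ∑ i, (μ i - π i) * ET i j)
      ≤ univ.sup' univ_nonempty (fun q : V × V => ET q.1 q.2) - tav := by
  obtain rfl : P = G.randomWalk := funext₂ hP
  obtain rfl : π = G.stationaryDist := funext hπ
  have hshift : (fun j => ∑ i, (μ i - G.stationaryDist i) * ET i j)
      = fun j => ∑ i, μ i * ET i j + -tav := by
    funext j
    simp only [sub_mul, sum_sub_distrib, htav,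
      hG.sum_stationaryDist_mul_eq_of_hitting hET_step hET_sym]
    ring
  rw [hshift, ← sup'_add, ← sub_eq_add_neg]
  refine ⟨rfl, sub_le_sub_right (sup'_le _ _ fun j _ => ?_) _⟩
  calc ∑ i, μ i * ET i j
      ≤ ∑ i, μ i * univ.sup' univ_nonempty (fun q : V × V => ET q.1 q.2) :=
        sum_le_sum fun i _ => mul_le_mul_of_nonneg_left
          (le_sup' (fun q : V × V => ET q.1 q.2) (mem_univ (i, j))) (hμ0 i)
    _ = univ.sup' univ_nonempty (fun q : V × V => ET q.1 q.2) := by rw [← sum_mul, hμ1, one_mul]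

/-- For the simple random walk on a connected graph `G` with stationary
distribution `π_i = deg i / (2|E|)` and symmetric mean hitting times
(`E_i[τ_j] = E_j[τ_i]`), the access time from any distribution `μ` to `π` satisfies
`H(μ,π) = max_j Σ_i μ_i E_i[τ_j] − t_av`, and in particular
`H(μ,π) ≤ max_{i,j} E_i[τ_j] − t_av`, where `t_av = Σ_{i,j} π_i π_j E_i[τ_j]`. -/
theorem rw_symmetric_hitting_access_time_to_stationary
    {V : Type*} [Fintype V] [DecidableEq V] [Nonempty V]
    (G : SimpleGraph V) [DecidableRel G.Adj] (hG : G.Connected)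
    (P : V → V → ℝ)
    (hP : ∀ i j, P i j = if G.Adj i j then 1 / (G.degree i : ℝ) else 0)
    (ET : V → V → ℝ)
    (hET_diag : ∀ j, ET j j = 0)
    (hET_step : ∀ i j, i ≠ j → ET i j = 1 + ∑ k, P i k * ET k j)
    (hET_sym : ∀ i j, ET i j = ET j i)
    (π : V → ℝ)
    (hπ : ∀ i, π i = (G.degree i : ℝ) / (2 * (G.edgeFinset.card : ℝ)))
    (tav : ℝ)
    (htav : tav = ∑ i, ∑ j, π i * π j * ET i j)
    (μ : V → ℝ)
    (hμ0 : ∀ i, 0 ≤ μ i) (hμ1 : ∑ i, μ i = 1) :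
    univ.sup' univ_nonempty (fun j => ∑ i, (μ i - π i) * ET i j)
      = univ.sup' univ_nonempty (fun j => ∑ i, μ i * ET i j) - tav ∧
    univ.sup' univ_nonempty (fun j => ∑ i, (μ i - π i) * ET i j)
      ≤ univ.sup' univ_nonempty (fun q : V × V => ET q.1 q.2) - tav :=
  rw_symmetric_hitting_access_time_to_stationary_general G hG P hP ET hET_step hET_sym π hπ tav htav
    μ hμ0 hμ1
end

section
/- For the simple random walk on the n-path {0,1,…,n} with reflecting boundaries, let μ be the discrete uniform distribution on {0,…,n} and let ν be the binomial distribution with parameters n and p, where p ∈ (0, 1 − 1/√3). Then H(μ,ν) ≥ n²(p² − 2p + 2/3) + n(p(1−p) − 1/6), and since p² − 2p + 2/3 > 0 for such p, H(μ,ν) is of order n² (it also satisfies H(μ,ν) ≤ n²). -/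
/-!
The expected hitting times of the path are explicit: `E_i[τ_j] = j² - i²` for `i ≤ j` and
`(n - j)² - (n - i)²` for `i ≥ j`, because the one-step equations force
`E_i[τ_j] - E_{i+1}[τ_j] = 2i + 1` left of `j` (and symmetrically right of `j`).
So every hitting time lies in `[0, n²]`, whence `H(μ,ν) ≤ n²`. For the target `j = 0` the
hitting time is `2ni - i²`, a quadratic in `i`, and its expectations under the uniform and the
binomial law follow from their first two moments; the binomial ones are the classical
Bernstein polynomial identities.
-/

open Finset Polynomial Fin.NatCast

theorem bernsteinPolynomial.eval_eq {R : Type*} [CommRing R] (n ν : ℕ) (x : R) :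
    (bernsteinPolynomial R n ν).eval x = n.choose ν * x ^ ν * (1 - x) ^ (n - ν) := by
  simp [bernsteinPolynomial]

theorem bernsteinPolynomial.sum_two_mul_sub_sq_mul_eval {R : Type*} [CommRing R] (n : ℕ)
    (x : R) :
    ∑ k ∈ range (n + 1), (2 * n * k - k ^ 2) * (bernsteinPolynomial R n k).eval x
      = n ^ 2 * (2 * x - x ^ 2) - n * x * (1 - x) := by
  have h0 := congrArg (eval x) (bernsteinPolynomial.sum R n)
  have h1 := congrArg (eval x) (bernsteinPolynomial.sum_smul R n)
  have h2 := congrArg (eval x) (bernsteinPolynomial.variance R n)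
  simp only [eval_finsetSum, eval_mul, eval_pow, eval_sub, eval_natCast, eval_X, eval_one,
    nsmul_eq_mul] at h0 h1 h2
  have hsplit : ∀ k ∈ range (n + 1), (2 * n * k - k ^ 2 : R) * (bernsteinPolynomial R n k).eval x
      = (n * x) ^ 2 * (bernsteinPolynomial R n k).eval x
        + 2 * n * (1 - x) * (k * (bernsteinPolynomial R n k).eval x)
        - (n * x - k) ^ 2 * (bernsteinPolynomial R n k).eval x := fun k _ => by ring
  rw [sum_congr rfl hsplit, sum_sub_distrib, sum_add_distrib, ← mul_sum, ← mul_sum, h0, h1, h2]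
  ring

theorem sum_range_two_mul_sub_sq {R : Type*} [Field R] [CharZero R] (a : R) (m : ℕ) :
    ∑ k ∈ range (m + 1), (2 * a * k - k ^ 2)
      = a * m * (m + 1) - m * (m + 1) * (2 * m + 1) / 6 := by
  induction m with
  | zero => simp
  | succ m ih => rw [sum_range_succ, ih]; push_cast; ring

theorem sum_range_uniform_sub_bernstein_mul (n : ℕ) (p : ℝ) :
    ∑ k ∈ range (n + 1), (1 / ((n : ℝ) + 1) - (bernsteinPolynomial ℝ n k).eval p)
      * (2 * n * k - k ^ 2)
      = (n : ℝ) ^ 2 * (p ^ 2 - 2 * p + 2 / 3) + n * (p * (1 - p) - 1 / 6) := by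
  simp_rw [sub_mul _ ((bernsteinPolynomial ℝ n _).eval p),
    mul_comm ((bernsteinPolynomial ℝ n _).eval p)]
  rw [sum_sub_distrib, ← mul_sum, sum_range_two_mul_sub_sq,
    bernsteinPolynomial.sum_two_mul_sub_sq_mul_eval]
  field_simp
  ring

theorem sq_sub_two_mul_add_two_thirds_pos {p : ℝ} (hp : p < 1 - 1 / √3) :
    0 < p ^ 2 - 2 * p + 2 / 3 := by
  have h : (1 / √3) ^ 2 < (1 - p) ^ 2 := pow_lt_pow_left₀ (by linarith) (by positivity) two_ne_zero
  rw [div_pow, Real.sq_sqrt zero_le_three] at h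
  linarith

theorem Finset.sum_sub_mul_le {ι : Type*} (s : Finset ι) {μ ν h : ι → ℝ} {c : ℝ}
    (hμ : ∑ i ∈ s, μ i = 1) (hμ0 : ∀ i ∈ s, 0 ≤ μ i) (hν0 : ∀ i ∈ s, 0 ≤ ν i)
    (hh : ∀ i ∈ s, h i ∈ Set.Icc 0 c) : ∑ i ∈ s, (μ i - ν i) * h i ≤ c := by
  have hμh : ∑ i ∈ s, μ i * h i ≤ c := calc
    ∑ i ∈ s, μ i * h i ≤ ∑ i ∈ s, μ i * c :=
      sum_le_sum fun i hi => mul_le_mul_of_nonneg_left (hh i hi).2 (hμ0 i hi)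
    _ = c := by rw [← sum_mul, hμ, one_mul]
  have hνh : 0 ≤ ∑ i ∈ s, ν i * h i := sum_nonneg fun i hi => mul_nonneg (hν0 i hi) (hh i hi).1
  simp only [sub_mul, sum_sub_distrib]
  linarith

/-- `f` solves the hitting-time equations of the target `J` for the walk on `ℕ` reflected
at `0`. -/
theorem eq_add_sq_sub_sq_of_reflecting {f : ℕ → ℝ} {J : ℕ} (h0 : 0 < J → f 0 = 1 + f 1)
    (hstep : ∀ m, m + 1 < J → 2 * f (m + 1) = 2 + f m + f (m + 2)) {i : ℕ} (hi : i ≤ J) :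
    f i = f J + J ^ 2 - i ^ 2 := by
  have hdiff : ∀ k < J, f k = f (k + 1) + 2 * k + 1 := by
    intro k
    induction k with
    | zero => intro h; simpa [add_comm] using h0 h
    | succ k ih => intro h; push_cast; linarith [hstep k h, ih (by omega)]
  induction hi using Nat.decreasingInduction with
  | self => ring
  | of_succ k hk ih => rw [hdiff k hk, ih]; push_cast; ring

section PathWalk

variable {n : ℕ} {P : Fin (n + 1) → Fin (n + 1) → ℝ}
  (hP : ∀ i j : Fin (n + 1), P i j =
    if (i : ℕ) = 0 then (if (j : ℕ) = 1 then 1 else 0)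
    else if (i : ℕ) = n then (if (j : ℕ) + 1 = n then 1 else 0)
    else if (j : ℕ) = (i : ℕ) + 1 ∨ (j : ℕ) + 1 = (i : ℕ) then 1 / 2 else 0)
include hP

theorem sum_transition_mul_of_val_eq_zero {i a : Fin (n + 1)} (hi : (i : ℕ) = 0)
    (ha : (a : ℕ) = 1) (g : Fin (n + 1) → ℝ) : ∑ k, P i k * g k = g a := by
  rw [sum_eq_single_of_mem a (mem_univ _) fun k _ hk => ?_]
  · simp [hP, hi, ha]
  · have : (k : ℕ) ≠ 1 := fun h => hk (Fin.ext (h.trans ha.symm))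
    simp [hP, hi, this]

theorem sum_transition_mul_of_val_eq_last {i a : Fin (n + 1)} (hi : (i : ℕ) = n)
    (ha : (a : ℕ) + 1 = n) (g : Fin (n + 1) → ℝ) : ∑ k, P i k * g k = g a := by
  have hn : n ≠ 0 := by omega
  rw [sum_eq_single_of_mem a (mem_univ _) fun k _ hk => ?_]
  · simp [hP, hn, hi, ha]
  · have : (k : ℕ) + 1 ≠ n := fun h => hk (Fin.ext (by omega))
    simp [hP, hn, hi, this]

theorem sum_transition_mul_of_val_interior {i a b : Fin (n + 1)} (hi : (i : ℕ) ≠ n)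
    (ha : (a : ℕ) + 1 = i) (hb : (b : ℕ) = i + 1) (g : Fin (n + 1) → ℝ) :
    ∑ k, P i k * g k = (g a + g b) / 2 := by
  have hi0 : (i : ℕ) ≠ 0 := by omega
  rw [sum_eq_add_of_mem b a (mem_univ _) (mem_univ _) (fun h => by omega) fun k _ hk => ?_]
  · simp [hP, hi0, hi, ha, hb]
    ring
  · have h1 : (k : ℕ) ≠ i + 1 := fun h => hk.1 (Fin.ext (by omega))
    have h2 : (k : ℕ) + 1 ≠ i := fun h => hk.2 (Fin.ext (by omega))
    simp [hP, hi0, hi, h1, h2]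

variable {ET : Fin (n + 1) → Fin (n + 1) → ℝ} (hET_diag : ∀ j, ET j j = 0)
  (hET_step : ∀ i j, i ≠ j → ET i j = 1 + ∑ k, P i k * ET k j)
include hET_diag hET_step

theorem hittingTime_eq_of_le {i j : Fin (n + 1)} (hij : (i : ℕ) ≤ j) :
    ET i j = ((j : ℕ) : ℝ) ^ 2 - ((i : ℕ) : ℝ) ^ 2 := by
  have hval (a : ℕ) (ha : a ≤ n) : ((a : Fin (n + 1)) : ℕ) = a := Fin.val_cast_of_lt (by omega)
  have hj : (j : ℕ) ≤ n := Nat.lt_succ_iff.mp j.isLt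
  have hf := eq_add_sq_sub_sq_of_reflecting (f := fun k : ℕ => ET k j) (J := j) ?_ ?_ hij
  · simpa [hET_diag] using hf
  · intro hj0
    have hne : ((0 : ℕ) : Fin (n + 1)) ≠ j := fun h => by
      have := congrArg Fin.val h; rw [hval 0 (by omega)] at this; omega
    rw [hET_step _ _ hne,
      sum_transition_mul_of_val_eq_zero hP (hval 0 (by omega)) (hval 1 (by omega))]
  · intro m hm
    have hne : ((m + 1 : ℕ) : Fin (n + 1)) ≠ j := fun h => by
      have := congrArg Fin.val h; rw [hval _ (by omega)] at this; omega
    rw [hET_step _ _ hne,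
      sum_transition_mul_of_val_interior hP (a := (m : ℕ)) (b := (m + 2 : ℕ))
      (by rw [hval _ (by omega)]; omega) (by rw [hval _ (by omega), hval _ (by omega)])
      (by rw [hval _ (by omega), hval _ (by omega)])]
    ring

theorem hittingTime_eq_of_ge {i j : Fin (n + 1)} (hij : (j : ℕ) ≤ i) :
    ET i j = ((n : ℝ) - (j : ℕ)) ^ 2 - ((n : ℝ) - (i : ℕ)) ^ 2 := by
  have hval (a : ℕ) (ha : a ≤ n) : ((a : Fin (n + 1)) : ℕ) = a := Fin.val_cast_of_lt (by omega)
  have hi : (i : ℕ) ≤ n := Nat.lt_succ_iff.mp i.isLt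
  have hf := eq_add_sq_sub_sq_of_reflecting (f := fun k : ℕ => ET (n - k : ℕ) j) (J := n - j)
    ?_ ?_ (i := n - i) (by omega)
  · rw [Nat.sub_sub_self hi, Nat.sub_sub_self (hij.trans hi)] at hf
    simpa [hET_diag, Nat.cast_sub hi, Nat.cast_sub (hij.trans hi)] using hf
  · intro hj0
    have hne : ((n : ℕ) : Fin (n + 1)) ≠ j := fun h => by
      have := congrArg Fin.val h; rw [hval _ (by omega)] at this; omega
    rw [Nat.sub_zero, hET_step _ _ hne,
      sum_transition_mul_of_val_eq_last hP (a := (n - 1 : ℕ)) (hval _ le_rfl)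
        (by rw [hval _ (by omega)]; omega)]
  · intro m hm
    have hne : ((n - (m + 1) : ℕ) : Fin (n + 1)) ≠ j := fun h => by
      have := congrArg Fin.val h; rw [hval _ (by omega)] at this; omega
    rw [hET_step _ _ hne, sum_transition_mul_of_val_interior hP (a := (n - (m + 2) : ℕ))
      (b := (n - m : ℕ)) (by rw [hval _ (by omega)]; omega)
      (by rw [hval _ (by omega), hval _ (by omega)]; omega)
      (by rw [hval _ (by omega), hval _ (by omega)]; omega)]
    ring

theorem hittingTime_mem_Icc (i j : Fin (n + 1)) : ET i j ∈ Set.Icc 0 ((n : ℝ) ^ 2) := by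
  have hi : ((i : ℕ) : ℝ) ≤ n := by exact_mod_cast Nat.lt_succ_iff.mp i.isLt
  have hj : ((j : ℕ) : ℝ) ≤ n := by exact_mod_cast Nat.lt_succ_iff.mp j.isLt
  rcases le_total (i : ℕ) j with hij | hij
  · have hij' : ((i : ℕ) : ℝ) ≤ (j : ℕ) := by exact_mod_cast hij
    rw [hittingTime_eq_of_le hP hET_diag hET_step hij]
    constructor <;> nlinarith [Nat.cast_nonneg (α := ℝ) (i : ℕ)]
  · have hij' : ((j : ℕ) : ℝ) ≤ (i : ℕ) := by exact_mod_cast hij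
    rw [hittingTime_eq_of_ge hP hET_diag hET_step hij]
    constructor <;> nlinarith [Nat.cast_nonneg (α := ℝ) (j : ℕ)]

end PathWalk

theorem npath_access_time_uniform_binomial_general
    (n : ℕ)
    (p : ℝ) (hp0 : 0 < p) (hp1 : p < 1 - 1 / Real.sqrt 3)
    (P : Fin (n + 1) → Fin (n + 1) → ℝ)
    (hP : ∀ i j : Fin (n + 1), P i j =
      if (i : ℕ) = 0 then (if (j : ℕ) = 1 then 1 else 0)
      else if (i : ℕ) = n then (if (j : ℕ) + 1 = n then 1 else 0)
      else if (j : ℕ) = (i : ℕ) + 1 ∨ (j : ℕ) + 1 = (i : ℕ) then 1 / 2 else 0)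
    (ET : Fin (n + 1) → Fin (n + 1) → ℝ)
    (hET_diag : ∀ j, ET j j = 0)
    (hET_step : ∀ i j, i ≠ j → ET i j = 1 + ∑ k, P i k * ET k j)
    (μ ν : Fin (n + 1) → ℝ)
    (hμ : ∀ i, μ i = 1 / ((n : ℝ) + 1))
    (hν : ∀ i : Fin (n + 1), ν i =
      (n.choose (i : ℕ) : ℝ) * p ^ (i : ℕ) * (1 - p) ^ (n - (i : ℕ))) :
    (n : ℝ) ^ 2 * (p ^ 2 - 2 * p + 2 / 3) + n * (p * (1 - p) - 1 / 6)
      ≤ univ.sup' univ_nonempty (fun j => ∑ i, (μ i - ν i) * ET i j) ∧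
    0 < p ^ 2 - 2 * p + 2 / 3 ∧
    univ.sup' univ_nonempty (fun j => ∑ i, (μ i - ν i) * ET i j) ≤ (n : ℝ) ^ 2 := by
  have hET_zero (i : Fin (n + 1)) : ET i 0 = 2 * n * (i : ℕ) - ((i : ℕ) : ℝ) ^ 2 := by
    rw [hittingTime_eq_of_ge hP hET_diag hET_step (by simp)]
    simp only [Fin.val_zero, CharP.cast_eq_zero]
    ring
  have hvalue : ∑ i, (μ i - ν i) * ET i 0
      = (n : ℝ) ^ 2 * (p ^ 2 - 2 * p + 2 / 3) + n * (p * (1 - p) - 1 / 6) := by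
    rw [← sum_range_uniform_sub_bernstein_mul, ← Fin.sum_univ_eq_sum_range]
    exact sum_congr rfl fun i _ => by rw [hμ, hν, hET_zero, bernsteinPolynomial.eval_eq]
  refine ⟨hvalue ▸ le_sup' (fun j => ∑ i, (μ i - ν i) * ET i j) (mem_univ 0),
    sq_sub_two_mul_add_two_thirds_pos hp1, sup'_le _ _ fun j _ => univ.sum_sub_mul_le ?_ ?_ ?_
      fun i _ => hittingTime_mem_Icc hP hET_diag hET_step i j⟩
  · simp only [hμ, sum_const, card_univ, Fintype.card_fin, nsmul_eq_mul, Nat.cast_add,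
      Nat.cast_one]
    field_simp
  · intro i _
    rw [hμ]
    positivity
  · have : 0 ≤ 1 - p := by linarith [show 0 < 1 / √3 by positivity]
    intro i _
    rw [hν]
    positivity

/-- For the simple random walk on the n-path `{0,…,n}` with reflecting
boundaries, with `μ` uniform on `{0,…,n}` and `ν` binomial with parameters `n` and
`p ∈ (0, 1 − 1/√3)`, the access time `H(μ,ν) = max_j Σ_i (μ_i − ν_i) E_i[τ_j]`
satisfies `H(μ,ν) ≥ n²(p² − 2p + 2/3) + n(p(1−p) − 1/6)`; moreover
`p² − 2p + 2/3 > 0` for such `p`, and `H(μ,ν) ≤ n²`, so `H(μ,ν) = Θ(n²)`. -/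
theorem npath_access_time_uniform_binomial
    (n : ℕ) (hn : 0 < n)
    (p : ℝ) (hp0 : 0 < p) (hp1 : p < 1 - 1 / Real.sqrt 3)
    (P : Fin (n + 1) → Fin (n + 1) → ℝ)
    (hP : ∀ i j : Fin (n + 1), P i j =
      if (i : ℕ) = 0 then (if (j : ℕ) = 1 then 1 else 0)
      else if (i : ℕ) = n then (if (j : ℕ) + 1 = n then 1 else 0)
      else if (j : ℕ) = (i : ℕ) + 1 ∨ (j : ℕ) + 1 = (i : ℕ) then 1 / 2 else 0)
    (ET : Fin (n + 1) → Fin (n + 1) → ℝ)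
    (hET_diag : ∀ j, ET j j = 0)
    (hET_step : ∀ i j, i ≠ j → ET i j = 1 + ∑ k, P i k * ET k j)
    (μ ν : Fin (n + 1) → ℝ)
    (hμ : ∀ i, μ i = 1 / ((n : ℝ) + 1))
    (hν : ∀ i : Fin (n + 1), ν i =
      (n.choose (i : ℕ) : ℝ) * p ^ (i : ℕ) * (1 - p) ^ (n - (i : ℕ))) :
    (n : ℝ) ^ 2 * (p ^ 2 - 2 * p + 2 / 3) + n * (p * (1 - p) - 1 / 6)
      ≤ univ.sup' univ_nonempty (fun j => ∑ i, (μ i - ν i) * ET i j) ∧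
    0 < p ^ 2 - 2 * p + 2 / 3 ∧
    univ.sup' univ_nonempty (fun j => ∑ i, (μ i - ν i) * ET i j) ≤ (n : ℝ) ^ 2 :=
  npath_access_time_uniform_binomial_general n p hp0 hp1 P hP ET hET_diag hET_step μ ν hμ hν
end
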